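/- Let F be a non-degenerate cdf on ℝ with finite first absolute moment, c > 0 and δ > 0, and suppose F solves problem P_{c,δ} and ω_F < ∞. Then supp(F) = {a_0, a_1, …, a_m} where m ≥ 1, a_0 = α_F, a_m = ω_F, δ < a_{n+1} − a_n < 1/c for n = 0,…,m−2, and a_m − a_{m−1} = 1/c. Moreover cδ < 1 and, with G(a_0) ∈ (0,1), G(a_n) = G(a_0)·∏_{i=0}^{n−1} (1 − c(a_{i+1} − a_i)) for n = 0,1,…,m−1. -/

import Mathlib

open MeasureTheory Set
open scoped ENNReal NNReal

/-- Survival function `G(x) = 1 - F(x) = μ(x, ∞)` of the distribution `μ`. -/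
noncomputable def survG (μ : Measure ℝ) (x : ℝ) : ℝ := (μ (Set.Ioi x)).toReal

/-- `H(x) = G(x+δ) - c ∫_x^∞ G(t) dt`. -/
noncomputable def funH (μ : Measure ℝ) (c δ x : ℝ) : ℝ :=
  survG μ (x + δ) - c * ∫ t in Set.Ioi x, survG μ t

/-- The support of the distribution: points every neighbourhood of which has positive mass. -/
def suppF (μ : Measure ℝ) : Set ℝ :=
  {x | ∀ ε > 0, 0 < μ (Set.Ioo (x - ε) (x + ε))}

/-- The set `R` of continuity points `x` of `F` in the support such that `x + δ` is an atom. -/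
def Rset (μ : Measure ℝ) (δ : ℝ) : Set ℝ :=
  {x ∈ suppF μ | μ {x} = 0 ∧ 0 < μ {x + δ}}

/-- `T = supp(F) \ R`. -/
def Tset (μ : Measure ℝ) (δ : ℝ) : Set ℝ := suppF μ \ Rset μ δ

set_option linter.unusedSectionVars false
set_option linter.unusedVariables false
set_option maxHeartbeats 1000000

section Basics
variable (μ : Measure ℝ) [IsProbabilityMeasure μ]

lemma survG_anti : Antitone (survG μ) := fun _ _ hxy =>
  ENNReal.toReal_mono (measure_ne_top μ _) (measure_mono (Ioi_subset_Ioi hxy))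

lemma survG_nonneg (x : ℝ) : 0 ≤ survG μ x := ENNReal.toReal_nonneg

lemma survG_le_one (x : ℝ) : survG μ x ≤ 1 := by
  have h := ENNReal.toReal_mono (by simp) (prob_le_one (μ := μ) (s := Ioi x))
  simpa [survG] using h

lemma measurable_survG : Measurable (survG μ) := (survG_anti μ).measurable

variable {μ}

lemma not_mem_suppF_iff {x : ℝ} : x ∉ suppF μ ↔ ∃ ε > 0, μ (Ioo (x - ε) (x + ε)) = 0 := by
  simp only [suppF, mem_setOf_eq, not_forall, pos_iff_ne_zero, not_ne_iff]
  tauto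

lemma mem_suppF_of_atom {y : ℝ} (h : 0 < μ {y}) : y ∈ suppF μ := by
  intro ε hε
  exact h.trans_le (measure_mono (by intro z hz; simp at hz; subst hz; constructor <;> linarith))

lemma isClosed_suppF : IsClosed (suppF μ) := by
  rw [← isOpen_compl_iff, Metric.isOpen_iff]
  intro x hx
  obtain ⟨ε, hε, hzero⟩ := not_mem_suppF_iff.1 hx
  refine ⟨ε / 2, by positivity, fun y hy => ?_⟩
  simp only [Metric.mem_ball, Real.dist_eq, abs_sub_lt_iff] at hy
  refine not_mem_suppF_iff.2 ⟨ε / 2, by positivity, measure_mono_null ?_ hzero⟩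
  intro z hz
  simp only [mem_Ioo] at hz ⊢
  constructor <;> linarith [hy.1, hy.2]

lemma measure_compl_suppF : μ (suppF μ)ᶜ = 0 := by
  have hcover : (suppF μ)ᶜ ⊆ ⋃ (p : ℚ) (q : ℚ) (_ : μ (Ioo (p : ℝ) q) = 0), Ioo (p : ℝ) q := by
    intro x hx
    obtain ⟨ε, hε, hzero⟩ := not_mem_suppF_iff.1 hx
    obtain ⟨p, hp1, hp2⟩ := exists_rat_btwn (show x - ε < x by linarith)
    obtain ⟨q, hq1, hq2⟩ := exists_rat_btwn (show x < x + ε by linarith)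
    have hsub : Ioo (p : ℝ) q ⊆ Ioo (x - ε) (x + ε) := by
      intro z hz; simp only [mem_Ioo] at hz ⊢; constructor <;> linarith
    exact mem_iUnion.2 ⟨p, mem_iUnion.2 ⟨q, mem_iUnion.2
      ⟨measure_mono_null hsub hzero, ⟨hp2, hq1⟩⟩⟩⟩
  refine measure_mono_null hcover ?_
  refine measure_iUnion_null fun p => measure_iUnion_null fun q => measure_iUnion_null fun h => h

lemma nonempty_inter_suppF {A : Set ℝ} (h : 0 < μ A) : (A ∩ suppF μ).Nonempty := by
  rw [nonempty_iff_ne_empty]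
  intro he
  have : A ⊆ (suppF μ)ᶜ := fun x hx => fun hs => by
    have : x ∈ A ∩ suppF μ := ⟨hx, hs⟩
    simp [he] at this
  exact absurd (measure_mono_null this measure_compl_suppF) h.ne'

lemma measure_zero_of_disjoint_suppF {A : Set ℝ} (h : A ∩ suppF μ = ∅) : μ A = 0 := by
  by_contra hne
  obtain ⟨x, hx⟩ := nonempty_inter_suppF (μ := μ) (A := A) (pos_iff_ne_zero.2 hne)
  simp [h] at hx

end Basics

section Main
variable {μ : Measure ℝ} [IsProbabilityMeasure μ]

-- suppF nonempty
lemma suppF_nonempty : (suppF μ).Nonempty := by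
  rw [nonempty_iff_ne_empty]
  intro h
  have : μ (univ : Set ℝ) = 0 := measure_zero_of_disjoint_suppF (by simp [h])
  simp at this

lemma sSup_mem_suppF (homega : BddAbove (suppF μ)) : sSup (suppF μ) ∈ suppF μ :=
  IsClosed.csSup_mem isClosed_suppF suppF_nonempty homega

lemma le_omega (homega : BddAbove (suppF μ)) {s : ℝ} (hs : s ∈ suppF μ) :
    s ≤ sSup (suppF μ) := le_csSup homega hs

lemma survG_eq_zero (homega : BddAbove (suppF μ)) {x : ℝ} (hx : sSup (suppF μ) ≤ x) :
    survG μ x = 0 := by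
  have : Ioi x ∩ suppF μ = ∅ := by
    ext z; simp only [mem_inter_iff, mem_Ioi, mem_empty_iff_false, iff_false, not_and]
    intro hz hzs; exact absurd (le_omega homega hzs) (by linarith)
  simp [survG, measure_zero_of_disjoint_suppF this]

lemma survG_pos (homega : BddAbove (suppF μ)) {x : ℝ} (hx : x < sSup (suppF μ)) :
    0 < survG μ x := by
  set ω := sSup (suppF μ)
  have hω := sSup_mem_suppF homega
  have h := hω (ω - x) (by linarith)
  have hsub : Ioo (ω - (ω - x)) (ω + (ω - x)) ⊆ Ioi x := by
    intro z hz; simp only [mem_Ioo] at hz; simp only [mem_Ioi]; linarith [hz.1]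
  have h2 : 0 < μ (Ioi x) := h.trans_le (measure_mono hsub)
  exact ENNReal.toReal_pos h2.ne' (measure_ne_top μ _)

lemma survG_eq_of_null {x y : ℝ} (hxy : x ≤ y) (h : μ (Ioc x y) = 0) :
    survG μ x = survG μ y := by
  have : μ (Ioi x) = μ (Ioi y) := by
    rw [← Ioc_union_Ioi_eq_Ioi hxy]
    refine le_antisymm ?_ (measure_mono subset_union_right)
    calc μ (Ioc x y ∪ Ioi y) ≤ μ (Ioc x y) + μ (Ioi y) := measure_union_le _ _
    _ = μ (Ioi y) := by rw [h, zero_add]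
  simp [survG, this]

lemma survG_left_of_gap {u v : ℝ} (huv : u < v) (h : μ (Ioo u v) = 0) :
    survG μ u = (μ {v}).toReal + survG μ v := by
  have h1 : Ioi u = Ioo u v ∪ (insert v (Ioi v)) := by
    rw [Ioi_insert, Ioo_union_Ici_eq_Ioi huv]
  have h2 : μ (Ioi u) = μ (insert v (Ioi v)) := by
    rw [h1]
    refine le_antisymm ?_ (measure_mono subset_union_right)
    calc μ (Ioo u v ∪ insert v (Ioi v)) ≤ μ (Ioo u v) + μ (insert v (Ioi v)) :=
        measure_union_le _ _
    _ = _ := by rw [h, zero_add]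
  have h3 : μ (insert v (Ioi v)) = μ {v} + μ (Ioi v) := by
    rw [← union_singleton, Set.union_comm, measure_union (by simp) measurableSet_Ioi]
  rw [survG, h2, h3, ENNReal.toReal_add (measure_ne_top μ _) (measure_ne_top μ _)]
  rfl

lemma integrableOn_survG_Ioc (u v : ℝ) : IntegrableOn (survG μ) (Ioc u v) volume := by
  refine Measure.integrableOn_of_bounded (M := 1) (by simp) ((measurable_survG μ).aestronglyMeasurable) ?_
  refine Filter.Eventually.of_forall fun t => ?_
  rw [Real.norm_eq_abs, abs_of_nonneg (survG_nonneg μ t)]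
  exact survG_le_one μ t

lemma integrableOn_survG_Ioi (homega : BddAbove (suppF μ)) (x : ℝ) :
    IntegrableOn (survG μ) (Ioi x) volume := by
  set ω := sSup (suppF μ)
  have hIoi : IntegrableOn (survG μ) (Ioi ω) volume := by
    have : EqOn (survG μ) (fun _ => (0:ℝ)) (Ioi ω) := fun t ht =>
      survG_eq_zero homega (le_of_lt ht)
    exact (integrableOn_congr_fun this measurableSet_Ioi).2 (integrableOn_zero)
  rcases le_or_gt ω x with h | h
  · exact hIoi.mono_set (Ioi_subset_Ioi h)
  · rw [← Ioc_union_Ioi_eq_Ioi h.le]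
    exact (integrableOn_survG_Ioc x ω).union hIoi

lemma integral_Ioi_split (homega : BddAbove (suppF μ)) {x y : ℝ} (hxy : x ≤ y) :
    ∫ t in Ioi x, survG μ t = (∫ t in Ioc x y, survG μ t) + ∫ t in Ioi y, survG μ t := by
  rw [← Ioc_union_Ioi_eq_Ioi hxy] at *
  rw [setIntegral_union (Ioc_disjoint_Ioi le_rfl) measurableSet_Ioi
    (integrableOn_survG_Ioc x y) ((integrableOn_survG_Ioi homega y))]

lemma integral_Ioi_omega_zero (homega : BddAbove (suppF μ)) :
    ∫ t in Ioi (sSup (suppF μ)), survG μ t = 0 := by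
  rw [setIntegral_congr_fun measurableSet_Ioi
    (fun t ht => survG_eq_zero homega (le_of_lt ht) : EqOn (survG μ) (fun _ => (0:ℝ)) _)]
  simp

lemma integral_Ioc_eq_Ioo {u v : ℝ} :
    ∫ t in Ioc u v, survG μ t = ∫ t in Ioo u v, survG μ t := by
  apply setIntegral_congr_set
  exact (Ioo_ae_eq_Ioc (μ := volume) (a := u) (b := v)).symm

lemma integral_const_gap {u v q : ℝ} (huv : u ≤ v) (h : ∀ t ∈ Ioo u v, survG μ t = q) :
    ∫ t in Ioc u v, survG μ t = q * (v - u) := by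
  rw [integral_Ioc_eq_Ioo, setIntegral_congr_fun measurableSet_Ioo h, setIntegral_const,
    measureReal_def, Real.volume_Ioo, smul_eq_mul, ENNReal.toReal_ofReal (by linarith)]
  ring

lemma integral_gap_pos (homega : BddAbove (suppF μ)) {u v : ℝ} (huv : u < v)
    (hv : v ≤ sSup (suppF μ)) : 0 < ∫ t in Ioc u v, survG μ t := by
  set w := (u + v) / 2
  have hw1 : u < w := by simp only [w]; linarith
  have hw2 : w < v := by simp only [w]; linarith
  have hGw : 0 < survG μ w := survG_pos homega (by linarith)
  have h1 : survG μ w * (w - u) ≤ ∫ t in Ioc u w, survG μ t := by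
    have := integral_const_gap (μ := μ) (q := survG μ w) hw1.le
    calc survG μ w * (w - u) = ∫ _ in Ioc u w, survG μ w := by
          rw [setIntegral_const, measureReal_def, Real.volume_Ioc, smul_eq_mul,
            ENNReal.toReal_ofReal (by linarith)]; ring
    _ ≤ ∫ t in Ioc u w, survG μ t := by
          refine setIntegral_mono_on (integrableOn_const (by simp))
            (integrableOn_survG_Ioc u w) measurableSet_Ioc fun t ht => ?_
          exact survG_anti μ ht.2
  have h2 : ∫ t in Ioc u w, survG μ t ≤ ∫ t in Ioc u v, survG μ t := by
    refine setIntegral_mono_set (integrableOn_survG_Ioc u v)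
      (Filter.Eventually.of_forall fun t => survG_nonneg μ t)
      (HasSubset.Subset.eventuallyLE (Ioc_subset_Ioc_right hw2.le))
  have : 0 < survG μ w * (w - u) := by
    apply mul_pos hGw; linarith
  linarith

lemma mem_Tset_of_no_atom {δ : ℝ} {z : ℝ} (hz : z ∈ suppF μ) (h : μ {z + δ} = 0) :
    z ∈ Tset μ δ :=
  ⟨hz, fun hR => absurd hR.2.2 (by simp [h])⟩

lemma mem_Tset_of_atom_self {δ : ℝ} {z : ℝ} (hz : z ∈ suppF μ) (h : μ {z} ≠ 0) :
    z ∈ Tset μ δ :=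
  ⟨hz, fun hR => absurd hR.2.1 h⟩

lemma Tset_eq {c δ : ℝ} (hsol : ∀ z ∈ Tset μ δ, funH μ c δ z = 0) {z : ℝ} (hz : z ∈ Tset μ δ) :
    survG μ (z + δ) = c * ∫ t in Ioi z, survG μ t :=
  sub_eq_zero.mp (hsol z hz)

lemma null_of_suppF_inter {A : Set ℝ} (h : suppF μ ∩ A = ∅) : μ A = 0 :=
  measure_zero_of_disjoint_suppF (by rwa [Set.inter_comm] at h)

theorem step_lemma (homega : BddAbove (suppF μ)) {c δ : ℝ} (hc : 0 < c) (hδ : 0 < δ)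
    (hsol : ∀ z ∈ Tset μ δ, funH μ c δ z = 0)
    {x : ℝ} (hxS : x ∈ suppF μ) (hxω : x ≤ sSup (suppF μ))
    (hHx : c * ∫ t in Ioi x, survG μ t = survG μ x)
    (hgapA : suppF μ ∩ Ioo x (x + δ) = ∅)
    (hne : (suppF μ ∩ Iio x).Nonempty) :
    sSup (suppF μ ∩ Iio x) ∈ suppF μ ∧
    suppF μ ∩ Ioo (sSup (suppF μ ∩ Iio x)) x = ∅ ∧
    δ < x - sSup (suppF μ ∩ Iio x) ∧
    survG μ x = survG μ (sSup (suppF μ ∩ Iio x)) *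
      (1 - c * (x - sSup (suppF μ ∩ Iio x))) ∧
    c * ∫ t in Ioi (sSup (suppF μ ∩ Iio x)), survG μ t
      = survG μ (sSup (suppF μ ∩ Iio x)) := by
  have hnullA : μ (Ioo x (x + δ)) = 0 := null_of_suppF_inter hgapA
  -- Claim C1 : no support in (x - δ, x)
  have hC1 : suppF μ ∩ Ioo (x - δ) x = ∅ := by
    rw [eq_empty_iff_forall_notMem]
    rintro z ⟨hzS, hz1, hz2⟩
    have hzT : z ∈ Tset μ δ := by
      refine mem_Tset_of_no_atom hzS (measure_mono_null ?_ hnullA)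
      intro w hw
      simp only [mem_singleton_iff] at hw
      simp only [mem_Ioo, hw]
      constructor <;> linarith
    have heq1 : survG μ (z + δ) = survG μ x := by
      refine (survG_eq_of_null (by linarith) (measure_mono_null ?_ hnullA)).symm
      intro w hw
      simp only [mem_Ioc] at hw
      simp only [mem_Ioo]
      constructor <;> linarith [hw.1, hw.2]
    have heq2 := Tset_eq hsol hzT
    rw [integral_Ioi_split homega hz2.le, heq1] at heq2
    have hpos := integral_gap_pos (μ := μ) homega hz2 hxω
    nlinarith [hHx]
  have hnullC1 : μ (Ioo (x - δ) x) = 0 := null_of_suppF_inter hC1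
  -- Claim C2 : x - δ itself is not in the support
  have hC2 : x - δ ∉ suppF μ := by
    intro hbS
    by_cases hatom : μ {x - δ} = 0
    · -- accumulation from the left
      have haccum : ∀ ε : ℝ, 0 < ε → ε ≤ δ → 0 < μ (Ioo (x - δ - ε) (x - δ)) := by
        intro ε hε hεδ
        have h0 := hbS ε hε
        have hsub : Ioo (x - δ - ε) (x - δ + ε) ⊆
            Ioo (x - δ - ε) (x - δ) ∪ ({x - δ} ∪ Ioo (x - δ) x) := by
          intro w hw
          simp only [mem_Ioo] at hw
          rcases lt_trichotomy w (x - δ) with h | h | h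
          · exact Or.inl (by simp only [mem_Ioo]; constructor <;> linarith [hw.1])
          · exact Or.inr (Or.inl (by simp [h]))
          · refine Or.inr (Or.inr ?_)
            simp only [mem_Ioo]
            constructor <;> linarith [hw.2]
        have hb2 : μ ({x - δ} ∪ Ioo (x - δ) x) = 0 := measure_union_null hatom hnullC1
        have hle : μ (Ioo (x - δ - ε) (x - δ + ε)) ≤
            μ (Ioo (x - δ - ε) (x - δ)) + μ ({x - δ} ∪ Ioo (x - δ) x) :=
          le_trans (measure_mono hsub) (measure_union_le _ _)
        rw [hb2, add_zero] at hle
        exact lt_of_lt_of_le h0 hle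
      obtain ⟨x1, hx1mem, hx1S⟩ :=
        nonempty_inter_suppF (haccum (δ/2) (by linarith) (by linarith))
      simp only [mem_Ioo] at hx1mem
      have hx1b : x1 < x - δ := hx1mem.2
      have hx1lo : x - δ - δ/2 < x1 := hx1mem.1
      obtain ⟨x2, hx2mem, hx2S⟩ := nonempty_inter_suppF
        (haccum (x - δ - x1) (by linarith) (by linarith))
      simp only [mem_Ioo] at hx2mem
      have hx12 : x1 < x2 := by linarith [hx2mem.1]
      have hx2b : x2 < x - δ := hx2mem.2
      -- both are in T
      have hT : ∀ y : ℝ, x - δ - δ/2 < y → y < x - δ → y ∈ suppF μ → y ∈ Tset μ δ := by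
        intro y h1 h2 hyS
        refine mem_Tset_of_no_atom hyS (measure_mono_null ?_ hnullC1)
        intro w hw
        simp only [mem_singleton_iff] at hw
        simp only [mem_Ioo, hw]
        constructor <;> linarith
      have hx1T := hT x1 hx1lo hx1b hx1S
      have hx2T := hT x2 (by linarith) hx2b hx2S
      have heqG : survG μ (x1 + δ) = survG μ (x2 + δ) := by
        refine survG_eq_of_null (by linarith) (measure_mono_null ?_ hnullC1)
        intro w hw
        simp only [mem_Ioc] at hw
        simp only [mem_Ioo]
        constructor <;> linarith [hw.1, hw.2]
      have he1 := Tset_eq hsol hx1T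
      have he2 := Tset_eq hsol hx2T
      rw [integral_Ioi_split homega hx12.le] at he1
      have hpos := integral_gap_pos (μ := μ) homega hx12 (by linarith)
      rw [heqG, he2] at he1
      nlinarith
    · -- x - δ is an atom, hence in T
      have hbT : (x - δ) ∈ Tset μ δ := mem_Tset_of_atom_self hbS hatom
      have heq := Tset_eq hsol hbT
      have hbx : x - δ + δ = x := by ring
      rw [hbx, integral_Ioi_split homega (show x - δ ≤ x by linarith)] at heq
      have hpos := integral_gap_pos (μ := μ) homega (show x - δ < x by linarith) hxω
      nlinarith [hHx]
  -- every support point below x is below x - δ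
  have hbound : ∀ s ∈ suppF μ ∩ Iio x, s < x - δ := by
    rintro s ⟨hsS, hs⟩
    rcases lt_trichotomy s (x - δ) with h | h | h
    · exact h
    · exact absurd (h ▸ hsS) hC2
    · exfalso
      have hmem : s ∈ suppF μ ∩ Ioo (x - δ) x := ⟨hsS, by simp only [mem_Ioo]; exact ⟨h, hs⟩⟩
      rw [hC1] at hmem
      exact hmem
  set x' := sSup (suppF μ ∩ Iio x) with hx'def
  have hbdd : BddAbove (suppF μ ∩ Iio x) := ⟨x, fun s hs => le_of_lt hs.2⟩
  have hx'le : x' ≤ x - δ := csSup_le hne fun s hs => (hbound s hs).le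
  have hx'S : x' ∈ suppF μ := by
    have h1 : x' ∈ closure (suppF μ ∩ Iio x) := csSup_mem_closure hne hbdd
    exact closure_minimal (fun s hs => hs.1) isClosed_suppF h1
  have hx'lt : x' < x - δ := by
    rcases lt_or_eq_of_le hx'le with h | h
    · exact h
    · exact absurd (h ▸ hx'S) hC2
  have hgap : suppF μ ∩ Ioo x' x = ∅ := by
    rw [eq_empty_iff_forall_notMem]
    rintro z ⟨hzS, hz1, hz2⟩
    exact absurd (le_csSup hbdd ⟨hzS, hz2⟩) (not_le.2 hz1)
  have hnullgap : μ (Ioo x' x) = 0 := null_of_suppF_inter hgap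
  have hx'x : x' < x := by linarith
  have hval : survG μ x' = (μ {x}).toReal + survG μ x := survG_left_of_gap hx'x hnullgap
  have hconst : ∀ t ∈ Ioo x' x, survG μ t = survG μ x' := by
    intro t ht
    simp only [mem_Ioo] at ht
    have h2 : survG μ t = (μ {x}).toReal + survG μ x := by
      refine survG_left_of_gap ht.2 (measure_mono_null ?_ hnullgap)
      intro w hw
      simp only [mem_Ioo] at hw ⊢
      constructor <;> linarith [hw.1, hw.2, ht.1]
    rw [hval, h2]
  have hx'T : x' ∈ Tset μ δ := by
    refine mem_Tset_of_no_atom hx'S (measure_mono_null ?_ hnullgap)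
    intro w hw
    simp only [mem_singleton_iff] at hw
    simp only [mem_Ioo, hw]
    constructor <;> linarith
  have hGx'δ : survG μ (x' + δ) = survG μ x' := by
    refine (survG_eq_of_null (by linarith) (measure_mono_null ?_ hnullgap)).symm
    intro w hw
    simp only [mem_Ioc] at hw
    simp only [mem_Ioo]
    constructor <;> linarith [hw.1, hw.2]
  have heqx' := Tset_eq hsol hx'T
  rw [hGx'δ] at heqx'
  have hintgap : ∫ t in Ioc x' x, survG μ t = survG μ x' * (x - x') :=
    integral_const_gap hx'x.le hconst
  have hsplit := integral_Ioi_split (μ := μ) homega hx'x.le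
  rw [hsplit, hintgap] at heqx'
  refine ⟨hx'S, hgap, by linarith, by nlinarith [hHx, heqx'], ?_⟩
  rw [hsplit, hintgap]
  nlinarith [hHx, heqx']

lemma exists_below_omega (hnd : ∀ x : ℝ, μ {x} ≠ 1) (homega : BddAbove (suppF μ)) :
    (suppF μ ∩ Iio (sSup (suppF μ))).Nonempty := by
  set ω := sSup (suppF μ)
  by_contra h
  rw [not_nonempty_iff_eq_empty] at h
  have hIio : μ (Iio ω) = 0 := null_of_suppF_inter h
  have hIoi : μ (Ioi ω) = 0 := by
    refine null_of_suppF_inter ?_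
    rw [eq_empty_iff_forall_notMem]
    rintro z ⟨hzS, hz⟩
    exact absurd (le_omega homega hzS) (not_le.2 hz)
  have hcover : (univ : Set ℝ) ⊆ Iio ω ∪ ({ω} ∪ Ioi ω) := by
    intro z _
    rcases lt_trichotomy z ω with h | h | h
    · exact Or.inl h
    · exact Or.inr (Or.inl (by simp [h]))
    · exact Or.inr (Or.inr h)
  have h1 : (1 : ℝ≥0∞) ≤ μ {ω} := by
    calc (1 : ℝ≥0∞) = μ univ := (measure_univ).symm
    _ ≤ μ (Iio ω ∪ ({ω} ∪ Ioi ω)) := measure_mono hcover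
    _ ≤ μ (Iio ω) + μ ({ω} ∪ Ioi ω) := measure_union_le _ _
    _ ≤ μ (Iio ω) + (μ {ω} + μ (Ioi ω)) := by gcongr; exact measure_union_le _ _
    _ = μ {ω} := by rw [hIio, hIoi, zero_add, add_zero]
  exact hnd ω (le_antisymm prob_le_one h1)

open scoped Classical in
noncomputable def bseq (μ : Measure ℝ) : ℕ → ℝ
  | 0 => sSup (suppF μ)
  | k + 1 =>
      if (suppF μ ∩ Iio (bseq μ k)).Nonempty then sSup (suppF μ ∩ Iio (bseq μ k))
      else bseq μ k

lemma bseq_zero : bseq μ 0 = sSup (suppF μ) := rfl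

lemma bseq_succ_pos {k : ℕ} (h : (suppF μ ∩ Iio (bseq μ k)).Nonempty) :
    bseq μ (k + 1) = sSup (suppF μ ∩ Iio (bseq μ k)) := by
  rw [bseq, if_pos h]

-- the invariant
def Pinv (μ : Measure ℝ) (c δ : ℝ) (y : ℝ) : Prop :=
  y ∈ suppF μ ∧ y ≤ sSup (suppF μ) ∧ (c * ∫ t in Ioi y, survG μ t = survG μ y) ∧
    suppF μ ∩ Ioo y (y + δ) = ∅

lemma Pinv_zero (homega : BddAbove (suppF μ)) (c δ : ℝ) :
    Pinv μ c δ (sSup (suppF μ)) := by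
  refine ⟨sSup_mem_suppF homega, le_rfl, ?_, ?_⟩
  · rw [integral_Ioi_omega_zero homega, survG_eq_zero homega le_rfl, mul_zero]
  · rw [eq_empty_iff_forall_notMem]
    rintro z ⟨hzS, hz1, _⟩
    exact absurd (le_omega homega hzS) (not_le.2 hz1)

lemma Pinv_step (homega : BddAbove (suppF μ)) {c δ : ℝ} (hc : 0 < c) (hδ : 0 < δ)
    (hsol : ∀ z ∈ Tset μ δ, funH μ c δ z = 0)
    {y : ℝ} (hP : Pinv μ c δ y) (hne : (suppF μ ∩ Iio y).Nonempty) :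
    Pinv μ c δ (sSup (suppF μ ∩ Iio y)) ∧
    δ < y - sSup (suppF μ ∩ Iio y) ∧
    survG μ y = survG μ (sSup (suppF μ ∩ Iio y)) * (1 - c * (y - sSup (suppF μ ∩ Iio y))) ∧
    suppF μ ∩ Ioo (sSup (suppF μ ∩ Iio y)) y = ∅ := by
  obtain ⟨hyS, hyω, hHy, hgapA⟩ := hP
  obtain ⟨hS', hgap, hδlt, heq, hint⟩ := step_lemma homega hc hδ hsol hyS hyω hHy hgapA hne
  set y' := sSup (suppF μ ∩ Iio y)
  have hy'y : y' < y := by linarith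
  refine ⟨⟨hS', le_trans hy'y.le hyω, hint, ?_⟩, hδlt, heq, hgap⟩
  rw [eq_empty_iff_forall_notMem]
  rintro z ⟨hzS, hz1, hz2⟩
  have : z ∈ suppF μ ∩ Ioo y' y := ⟨hzS, hz1, by linarith⟩
  rw [hgap] at this
  exact this

/-- For `δ > 0`, if `F` solves `P_{c,δ}` and `ω_F < ∞`, then the support is a finite set
`{a_0 < a_1 < ⋯ < a_m}` with `m ≥ 1`, `a_0 = α_F`, `a_m = ω_F`,
`δ < a_{n+1} - a_n < 1/c` for `n ≤ m - 2`, `a_m - a_{m-1} = 1/c`; moreover `cδ < 1` and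
`G(a_n) = G(a_0) ∏_{i=0}^{n-1} (1 - c(a_{i+1} - a_i))` for `n = 0, …, m-1`. -/
theorem stmt8 (μ : Measure ℝ) [IsProbabilityMeasure μ]
    (hnd : ∀ x : ℝ, μ {x} ≠ 1)
    (hint : Integrable (fun x : ℝ => x) μ)
    (c δ : ℝ) (hc : 0 < c) (hδ : 0 < δ)
    (hsol : ∀ x ∈ Tset μ δ, funH μ c δ x = 0)
    (homega : BddAbove (suppF μ)) :
    ∃ (m : ℕ) (a : ℕ → ℝ), 1 ≤ m ∧
      a 0 = sInf (suppF μ) ∧ a m = sSup (suppF μ) ∧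
      (∀ n : ℕ, n + 2 ≤ m → δ < a (n + 1) - a n ∧ a (n + 1) - a n < 1 / c) ∧
      a m - a (m - 1) = 1 / c ∧
      suppF μ = a '' {n : ℕ | n ≤ m} ∧
      c * δ < 1 ∧
      0 < survG μ (a 0) ∧ survG μ (a 0) < 1 ∧
      ∀ n : ℕ, n ≤ m - 1 →
        survG μ (a n) = survG μ (a 0) * ∏ i ∈ Finset.range n, (1 - c * (a (i + 1) - a i)) := by
  classical
  set ω := sSup (suppF μ) with hωdef
  set b := bseq μ with hbdef
  have hQ0 : (suppF μ ∩ Iio (b 0)).Nonempty := by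
    rw [hbdef, bseq_zero]; exact exists_below_omega hnd homega
  -- termination
  have hterm : ∃ k, ¬ (suppF μ ∩ Iio (b k)).Nonempty := by
    by_contra hall
    push_neg at hall
    have hPall : ∀ k, Pinv μ c δ (b k) := by
      intro k
      induction k with
      | zero => rw [hbdef, bseq_zero]; exact Pinv_zero homega c δ
      | succ k ih =>
        rw [hbdef, bseq_succ_pos (hall k)]
        exact (Pinv_step homega hc hδ hsol ih (hall k)).1
    have hstep : ∀ k, δ < b k - b (k + 1) ∧
        survG μ (b k) = survG μ (b (k + 1)) * (1 - c * (b k - b (k + 1))) := by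
      intro k
      have h := Pinv_step homega hc hδ hsol (hPall k) (hall k)
      rw [hbdef, bseq_succ_pos (hall k)]
      exact ⟨h.2.1, h.2.2.1⟩
    -- growth
    have hgrow : ∀ k, survG μ (b k) ≤ survG μ (b (k + 1)) * (1 - c * δ) := by
      intro k
      obtain ⟨h1, h2⟩ := hstep k
      have h3 := survG_nonneg μ (b (k + 1))
      have h4 : 1 - c * (b k - b (k + 1)) ≤ 1 - c * δ := by nlinarith
      calc survG μ (b k) = survG μ (b (k + 1)) * (1 - c * (b k - b (k + 1))) := h2
      _ ≤ survG μ (b (k + 1)) * (1 - c * δ) := mul_le_mul_of_nonneg_left h4 h3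
    have hlt1 : b 1 < ω := by
      have := (hstep 0).1
      have hb0 : b 0 = ω := by rw [hbdef, bseq_zero]
      linarith [hb0 ▸ this]
    have hpos1 : 0 < survG μ (b 1) := survG_pos homega hlt1
    have hcδ : 0 < 1 - c * δ := by
      by_contra h
      push_neg at h
      have h2 := hgrow 0
      have hb0 : survG μ (b 0) = 0 := by
        rw [hbdef, bseq_zero]; exact survG_eq_zero homega le_rfl
      nlinarith [survG_nonneg μ (b 0), hgrow 1, survG_nonneg μ (b 2)]
    have key : ∀ k, survG μ (b 1) ≤ survG μ (b (k + 1)) * (1 - c * δ) ^ k := by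
      intro k
      induction k with
      | zero => simp
      | succ k ih =>
        calc survG μ (b 1) ≤ survG μ (b (k + 1)) * (1 - c * δ) ^ k := ih
        _ ≤ (survG μ (b (k + 2)) * (1 - c * δ)) * (1 - c * δ) ^ k := by
            have := hgrow (k + 1)
            have hp : (0:ℝ) ≤ (1 - c * δ) ^ k := le_of_lt (pow_pos hcδ k)
            nlinarith
        _ = survG μ (b (k + 2)) * (1 - c * δ) ^ (k + 1) := by ring
    have hlt : 1 - c * δ < 1 := by nlinarith
    obtain ⟨n, hn⟩ := exists_pow_lt_of_lt_one hpos1 hlt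
    have := key n
    have hle1 := survG_le_one μ (b (n + 1))
    have hp : (0:ℝ) ≤ (1 - c * δ) ^ n := le_of_lt (pow_pos hcδ n)
    nlinarith
  set m := Nat.find hterm with hmdef
  have hm : ¬ (suppF μ ∩ Iio (b m)).Nonempty := Nat.find_spec hterm
  have hltm : ∀ k, k < m → (suppF μ ∩ Iio (b k)).Nonempty := by
    intro k hk
    by_contra h
    exact absurd (Nat.find_le h) (not_le.2 hk)
  have hm1 : 1 ≤ m := by
    rcases Nat.eq_zero_or_pos m with h | h
    · exact absurd (h ▸ hQ0) hm
    · exact h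
  -- invariants up to m
  have hPk : ∀ k, k ≤ m → Pinv μ c δ (b k) := by
    intro k
    induction k with
    | zero => intro _; rw [hbdef, bseq_zero]; exact Pinv_zero homega c δ
    | succ k ih =>
      intro hk
      have hk' : k < m := Nat.lt_of_succ_le hk
      rw [hbdef, bseq_succ_pos (hltm k hk')]
      exact (Pinv_step homega hc hδ hsol (ih hk'.le) (hltm k hk')).1
  have hrec : ∀ k, k + 1 ≤ m → δ < b k - b (k + 1) ∧
      survG μ (b k) = survG μ (b (k + 1)) * (1 - c * (b k - b (k + 1))) ∧
      suppF μ ∩ Ioo (b (k + 1)) (b k) = ∅ := by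
    intro k hk
    have hk' : k < m := hk
    have h := Pinv_step homega hc hδ hsol (hPk k hk'.le) (hltm k hk')
    rw [hbdef, bseq_succ_pos (hltm k hk')]
    exact ⟨h.2.1, h.2.2.1, h.2.2.2⟩
  have hb0 : b 0 = ω := by rw [hbdef, bseq_zero]
  have hdec : ∀ k, k + 1 ≤ m → b (k + 1) < b k := by
    intro k hk
    have := (hrec k hk).1
    linarith
  have hmono : ∀ j k, j ≤ k → k ≤ m → b k ≤ b j := by
    intro j k hjk hkm
    induction k with
    | zero => simp at hjk; simp [hjk]
    | succ k ih =>
      rcases Nat.eq_or_lt_of_le hjk with h | h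
      · rw [h]
      · have h1 : j ≤ k := Nat.lt_succ_iff.mp h
        have h2 : k ≤ m := le_trans (Nat.le_succ k) hkm
        exact le_trans (hdec k hkm).le (ih h1 h2)
  have hbS : ∀ k, k ≤ m → b k ∈ suppF μ := fun k hk => (hPk k hk).1
  have hbω : ∀ k, k ≤ m → b k ≤ ω := fun k hk => (hPk k hk).2.1
  -- all support points are among the b k
  have hlb : ∀ s ∈ suppF μ, b m ≤ s := by
    intro s hs
    by_contra h
    push_neg at h
    exact hm ⟨s, hs, h⟩
  have hSsub : ∀ s ∈ suppF μ, ∃ j ≤ m, b j = s := by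
    intro s hs
    have hsm : b m ≤ s := hlb s hs
    have hs0 : s ≤ b 0 := hb0 ▸ le_omega homega hs
    have claim : ∀ k, k ≤ m → b k ≤ s → ∃ j ≤ m, b j = s := by
      intro k
      induction k with
      | zero => intro _ h; exact ⟨0, Nat.zero_le m, le_antisymm h hs0⟩
      | succ k ih =>
        intro hk h
        rcases le_or_gt (b k) s with h2 | h2
        · exact ih (le_trans (Nat.le_succ k) hk) h2
        · rcases eq_or_lt_of_le h with h3 | h3
          · exact ⟨k + 1, hk, h3⟩
          · exfalso
            have : s ∈ suppF μ ∩ Ioo (b (k + 1)) (b k) := ⟨hs, h3, h2⟩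
            rw [(hrec k hk).2.2] at this
            exact this
    exact claim m le_rfl hsm
  -- bottom of the support
  have hinf : sInf (suppF μ) = b m := by
    refine le_antisymm (csInf_le ⟨b m, fun s hs => hlb s hs⟩ (hbS m le_rfl)) ?_
    exact le_csInf suppF_nonempty fun s hs => hlb s hs
  -- top gap
  have hb1ω : b 1 < ω := by
    have := hdec 0 hm1
    rw [hb0] at this
    exact this
  have htop : b 0 - b 1 = 1 / c := by
    obtain ⟨hgt, heq, -⟩ := hrec 0 hm1
    have h0 : survG μ (b 0) = 0 := by rw [hb0]; exact survG_eq_zero homega le_rfl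
    have h1 : 0 < survG μ (b 1) := survG_pos homega hb1ω
    rw [h0] at heq
    have h2 : 1 - c * (b 0 - b 1) = 0 := by
      rcases mul_eq_zero.mp heq.symm with h | h
      · exact absurd h h1.ne'
      · exact h
    field_simp
    linarith
  have hcδ1 : c * δ < 1 := by
    have := (hrec 0 hm1).1
    have : δ < 1 / c := by linarith [htop]
    calc c * δ < c * (1 / c) := by exact (mul_lt_mul_iff_right₀ hc).2 this
    _ = 1 := by field_simp
  -- lower gaps are < 1/c
  have hlow : ∀ k, 1 ≤ k → k + 1 ≤ m → b k - b (k + 1) < 1 / c := by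
    intro k hk1 hk
    obtain ⟨hgt, heq, -⟩ := hrec k hk
    have hbk : b k < ω := lt_of_le_of_lt (hmono 1 k hk1 (le_trans (Nat.le_succ k) hk)) hb1ω
    have h1 : 0 < survG μ (b k) := survG_pos homega hbk
    have h2 : 0 < survG μ (b (k + 1)) :=
      survG_pos homega (lt_trans (hdec k hk) hbk)
    have h3 : 0 < 1 - c * (b k - b (k + 1)) := by nlinarith
    rw [lt_div_iff₀ hc]
    nlinarith
  -- atom at the bottom
  have hatom_bot : 0 < μ {b m} := by
    have hnull1 : μ (Iio (b m)) = 0 := by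
      refine null_of_suppF_inter ?_
      rw [eq_empty_iff_forall_notMem]
      rintro z ⟨hzS, hz⟩
      exact absurd (hlb z hzS) (not_le.2 hz)
    have hkm : (m - 1) + 1 ≤ m := by omega
    have hnull2 : μ (Ioo (b m) (b (m - 1))) = 0 := by
      have := (hrec (m - 1) hkm).2.2
      have hmm : m - 1 + 1 = m := by omega
      rw [hmm] at this
      exact null_of_suppF_inter this
    have hgap2 : b m < b (m - 1) := by
      have := hdec (m - 1) hkm
      have hmm : m - 1 + 1 = m := by omega
      rw [hmm] at this
      exact this
    set ε := min 1 (b (m - 1) - b m) with hεdef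
    have hε : 0 < ε := lt_min one_pos (by linarith)
    have h0 := hbS m le_rfl ε hε
    have hsub : Ioo (b m - ε) (b m + ε) ⊆ Iio (b m) ∪ ({b m} ∪ Ioo (b m) (b (m - 1))) := by
      intro w hw
      simp only [mem_Ioo] at hw
      rcases lt_trichotomy w (b m) with h | h | h
      · exact Or.inl h
      · exact Or.inr (Or.inl (by simp [h]))
      · refine Or.inr (Or.inr ?_)
        simp only [mem_Ioo]
        refine ⟨h, ?_⟩
        have := hw.2
        have hεle : ε ≤ b (m - 1) - b m := min_le_right _ _
        linarith
    have hle : μ (Ioo (b m - ε) (b m + ε)) ≤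
        μ (Iio (b m)) + (μ {b m} + μ (Ioo (b m) (b (m - 1)))) := by
      calc μ (Ioo (b m - ε) (b m + ε)) ≤ μ (Iio (b m) ∪ ({b m} ∪ Ioo (b m) (b (m - 1)))) :=
          measure_mono hsub
      _ ≤ μ (Iio (b m)) + μ ({b m} ∪ Ioo (b m) (b (m - 1))) := measure_union_le _ _
      _ ≤ μ (Iio (b m)) + (μ {b m} + μ (Ioo (b m) (b (m - 1)))) := by
          gcongr; exact measure_union_le _ _
    rw [hnull1, hnull2, zero_add, add_zero] at hle
    exact lt_of_lt_of_le h0 hle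
  have hGbm_pos : 0 < survG μ (b m) :=
    survG_pos homega (lt_of_le_of_lt (hmono 1 m hm1 le_rfl) hb1ω)
  have hGbm_lt1 : survG μ (b m) < 1 := by
    have hdisj : Disjoint {b m} (Ioi (b m)) := by simp
    have hun : μ ({b m} ∪ Ioi (b m)) = μ {b m} + μ (Ioi (b m)) :=
      measure_union hdisj measurableSet_Ioi
    have hle1 : μ {b m} + μ (Ioi (b m)) ≤ 1 := by
      rw [← hun]; exact prob_le_one
    have hfin1 : μ {b m} ≠ ⊤ := measure_ne_top μ _
    have hfin2 : μ (Ioi (b m)) ≠ ⊤ := measure_ne_top μ _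
    have h2 : (μ {b m}).toReal + (μ (Ioi (b m))).toReal ≤ 1 := by
      rw [← ENNReal.toReal_add hfin1 hfin2]
      calc (μ {b m} + μ (Ioi (b m))).toReal ≤ (1 : ℝ≥0∞).toReal :=
        ENNReal.toReal_mono (by simp) hle1
      _ = 1 := by simp
    have h3 : 0 < (μ {b m}).toReal := ENNReal.toReal_pos hatom_bot.ne' hfin1
    have : survG μ (b m) = (μ (Ioi (b m))).toReal := rfl
    linarith
  -- define a
  refine ⟨m, fun n => b (m - n), hm1, ?_, ?_, ?_, ?_, ?_, hcδ1, ?_, ?_, ?_⟩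
  · simp [hinf]
  · simp [hb0, hωdef]
  · intro n hn
    have hk : m - (n + 1) + 1 = m - n := by omega
    have hk1 : 1 ≤ m - (n + 1) := by omega
    have hkm : m - (n + 1) + 1 ≤ m := by omega
    constructor
    · have := (hrec (m - (n + 1)) hkm).1
      rw [hk] at this
      linarith
    · have := hlow (m - (n + 1)) hk1 hkm
      rw [hk] at this
      linarith
  · have h1 : m - (m - 1) = 1 := by omega
    have h2 : m - m = 0 := by omega
    show b (m - m) - b (m - (m - 1)) = 1 / c
    rw [h1, h2, htop]
  · ext s
    simp only [Set.mem_image, mem_setOf_eq]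
    constructor
    · intro hs
      obtain ⟨j, hj, hbj⟩ := hSsub s hs
      exact ⟨m - j, by omega, by rw [show m - (m - j) = j by omega]; exact hbj⟩
    · rintro ⟨n, hn, rfl⟩
      exact hbS (m - n) (by omega)
  · simpa using hGbm_pos
  · simpa using hGbm_lt1
  · intro n hn
    induction n with
    | zero => simp
    | succ n ih =>
      have hn' : n ≤ m - 1 := by omega
      have hk : m - (n + 1) + 1 = m - n := by omega
      have hkm : m - (n + 1) + 1 ≤ m := by omega
      have heq := (hrec (m - (n + 1)) hkm).2.1
      rw [hk] at heq
      rw [Finset.prod_range_succ, ← mul_assoc, ← ih hn', ← heq]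


end Main
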